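/- Let M be a topological space with basepoint x₀, fix 0 < ε < 1/6, and let σ : [0,ε] → M be a stick. Then the inclusion ι : Ω^σM ↪ ΩM is a homotopy equivalence. Explicitly, the map π_σ : ΩM → Ω^σM defined by π_σ(γ)(t) = σ(t) for t ∈ [0,ε], π_σ(γ)(t) = σ(2ε−t) for t ∈ [ε,2ε], π_σ(γ)(t) = γ((t−2ε)/(1−4ε)) for t ∈ [2ε,1−2ε], π_σ(γ)(t) = σ(t−1+2ε) for t ∈ [1−2ε,1−ε], and π_σ(γ)(t) = σ(1−t) for t ∈ [1−ε,1], is continuous, and π_σ ∘ ι is homotopic to the identity of Ω^σM while ι ∘ π_σ is homotopic to the identity of ΩM. -/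
import Mathlib


open Set

/-- The based loop space of `M` at `x₀`: continuous maps `[0,1] → M` sending both
endpoints to `x₀`, with the compact-open topology. -/
abbrev OmegaLoop (M : Type*) [TopologicalSpace M] (x₀ : M) : Type _ :=
  {γ : C(unitInterval, M) // γ 0 = x₀ ∧ γ 1 = x₀}

/-- The subspace `Ω^σ M` of loops following the stick `σ` on `[0,ε]` and its reverse on
`[1-ε,1]`. -/
abbrev StickOmegaLoop (M : Type*) [TopologicalSpace M] (x₀ : M) (ε : ℝ) (σ : ℝ → M) : Type _ :=
  {γ : OmegaLoop M x₀ // ∀ t : unitInterval,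
    ((t : ℝ) ≤ ε → γ.1 t = σ t) ∧ (1 - ε ≤ (t : ℝ) → γ.1 t = σ (1 - (t : ℝ)))}

/-- The inclusion `Ω^σ M ↪ Ω M` as a continuous map. -/
def stickInclusion (M : Type*) [TopologicalSpace M] (x₀ : M) (ε : ℝ) (σ : ℝ → M) :
    C(StickOmegaLoop M x₀ ε σ, OmegaLoop M x₀) :=
  ⟨Subtype.val, continuous_subtype_val⟩


section Aux
variable {M : Type*} [TopologicalSpace M] {x₀ : M} {ε : ℝ} {σ : ℝ → M}

noncomputable def stickExt (ε : ℝ) (σ : ℝ → M) : ℝ → M := fun a => σ (min ε (max 0 a))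

lemma stickExt_cont (hε0 : 0 ≤ ε) (hσ : ContinuousOn σ (Icc 0 ε)) :
    Continuous (stickExt ε σ) :=
  hσ.comp_continuous (by fun_prop)
    (fun a => ⟨le_min hε0 (le_max_left _ _), min_le_left _ _⟩)

omit [TopologicalSpace M] in
lemma stickExt_eq {a : ℝ} (h0 : 0 ≤ a) (h1 : a ≤ ε) : stickExt ε σ a = σ a := by
  unfold stickExt; rw [max_eq_right h0, min_eq_right h1]

noncomputable def gFun (ε : ℝ) (σ : ℝ → M) (s : ℝ) (γ : C(unitInterval, M)) (t : ℝ) : M :=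
  if t ≤ 2*s*ε then stickExt ε σ (s*ε - |t - s*ε|)
  else if t ≤ 1 - 2*s*ε then γ (projIcc 0 1 zero_le_one ((t - 2*s*ε)/(1 - 4*s*ε)))
  else stickExt ε σ (s*ε - |1 - t - s*ε|)

lemma gFun_cont {X : Type*} [TopologicalSpace X] (hε0 : 0 < ε) (hε : ε < 1/6)
    (hσ : ContinuousOn σ (Icc 0 ε)) (hσ0 : σ 0 = x₀)
    {s : X → ℝ} {γ : X → C(unitInterval, M)} {t : X → ℝ}
    (hs : Continuous s) (hγ : Continuous γ) (ht : Continuous t)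
    (hs0 : ∀ x, 0 ≤ s x) (hs1 : ∀ x, s x ≤ 1)
    (hγ0 : ∀ x, γ x 0 = x₀) (hγ1 : ∀ x, γ x 1 = x₀) :
    Continuous fun x => gFun ε σ (s x) (γ x) (t x) := by
  have hden : ∀ x, 1 - 4 * s x * ε ≠ 0 := by
    intro x
    have := hs0 x; have := hs1 x
    nlinarith [mul_le_mul_of_nonneg_right (hs1 x) hε0.le]
  have hseq : ∀ x, 2 * s x * ε ≤ 1 - 2 * s x * ε := by
    intro x
    nlinarith [mul_le_mul_of_nonneg_right (hs1 x) hε0.le, hs0 x]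
  have hA : Continuous fun x => stickExt ε σ (s x * ε - |t x - s x * ε|) :=
    (stickExt_cont hε0.le hσ).comp (by fun_prop)
  have hC : Continuous fun x => stickExt ε σ (s x * ε - |1 - t x - s x * ε|) :=
    (stickExt_cont hε0.le hσ).comp (by fun_prop)
  have hB : Continuous fun x =>
      (γ x) (projIcc 0 1 zero_le_one ((t x - 2 * s x * ε)/(1 - 4 * s x * ε))) := by
    apply hγ.eval
    exact continuous_projIcc.comp (((ht.sub (by fun_prop)).div (by fun_prop) hden))
  unfold gFun
  refine Continuous.if_le hA ?_ ht (by fun_prop) ?_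
  · apply Continuous.if_le hB hC ht (by fun_prop)
    intro x hx
    have h1 : (t x - 2 * s x * ε)/(1 - 4 * s x * ε) = 1 := by
      rw [hx, div_eq_one_iff_eq (hden x)]; ring
    have h2 : s x * ε - |1 - t x - s x * ε| = 0 := by
      rw [hx]
      have : (1:ℝ) - (1 - 2 * s x * ε) - s x * ε = s x * ε := by ring
      rw [this, abs_of_nonneg (mul_nonneg (hs0 x) hε0.le), sub_self]
    rw [h1, h2, projIcc_right, stickExt_eq le_rfl hε0.le, hσ0]
    exact hγ1 x
  · intro x hx
    have h2 : s x * ε - |t x - s x * ε| = 0 := by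
      rw [hx]
      have : (2:ℝ) * s x * ε - s x * ε = s x * ε := by ring
      rw [this, abs_of_nonneg (mul_nonneg (hs0 x) hε0.le), sub_self]
    rw [h2, stickExt_eq le_rfl hε0.le, hσ0, if_pos (hx ▸ hseq x)]
    have h1 : (t x - 2 * s x * ε)/(1 - 4 * s x * ε) = 0 := by
      rw [hx, sub_self, zero_div]
    rw [h1, projIcc_left]
    exact (hγ0 x).symm


lemma projIcc_unit (t : unitInterval) : projIcc 0 1 zero_le_one (t : ℝ) = t := by
  rw [projIcc_of_mem zero_le_one t.2]

variable {s : ℝ} {γ : C(unitInterval, M)}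

lemma gFun_at_zero (hε0 : 0 < ε) (hs0 : 0 ≤ s) (hσ0 : σ 0 = x₀) :
    gFun ε σ s γ 0 = x₀ := by
  have hse : 0 ≤ s * ε := mul_nonneg hs0 hε0.le
  unfold gFun
  rw [if_pos (by nlinarith : (0:ℝ) ≤ 2*s*ε), zero_sub, abs_neg, abs_of_nonneg hse, sub_self,
    stickExt_eq le_rfl hε0.le, hσ0]

lemma gFun_at_one (hε0 : 0 < ε) (hε : ε < 1/6) (hs0 : 0 ≤ s) (hs1 : s ≤ 1)
    (hγ1 : γ 1 = x₀) (hσ0 : σ 0 = x₀) : gFun ε σ s γ 1 = x₀ := by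
  have hse : 0 ≤ s * ε := mul_nonneg hs0 hε0.le
  have hse1 : s * ε ≤ ε := by nlinarith
  unfold gFun
  rw [if_neg (not_le.2 (by nlinarith : 2*s*ε < 1))]
  by_cases h : (1:ℝ) ≤ 1 - 2*s*ε
  · have h0 : s * ε = 0 := le_antisymm (by nlinarith) hse
    rw [if_pos h]
    have h2 : (1 - 2*s*ε)/(1 - 4*s*ε) = 1 := by
      rw [show (2:ℝ)*s*ε = 2*(s*ε) by ring, show (4:ℝ)*s*ε = 4*(s*ε) by ring, h0]; norm_num
    rw [h2, projIcc_right]; exact hγ1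
  · rw [if_neg h, show (1:ℝ) - 1 - s*ε = -(s*ε) by ring, abs_neg, abs_of_nonneg hse, sub_self,
      stickExt_eq le_rfl hε0.le, hσ0]

lemma gFun_s_zero (hε0 : 0 < ε) (hσ0 : σ 0 = x₀) (hγ0 : γ 0 = x₀) (t : unitInterval) :
    gFun ε σ 0 γ (t : ℝ) = γ t := by
  unfold gFun
  rcases eq_or_lt_of_le t.2.1 with h0 | h0
  · have ht : t = 0 := Subtype.ext h0.symm
    subst ht
    rw [if_pos (by norm_num : ((0:unitInterval):ℝ) ≤ 2*0*ε)]
    simp only [Icc.coe_zero, zero_mul, zero_sub, abs_neg, abs_zero, sub_zero, sub_self]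
    rw [stickExt_eq le_rfl hε0.le, hσ0]; exact hγ0.symm
  · rw [if_neg (by rw [show (2:ℝ)*0*ε = 0 by ring]; exact not_le.2 h0),
      if_pos (by rw [show (2:ℝ)*0*ε = 0 by ring]; linarith [t.2.2])]
    have harg : ((t:ℝ) - 2*0*ε)/(1 - 4*0*ε) = (t:ℝ) := by norm_num
    rw [harg, projIcc_unit]

lemma gFun_caseA (hε0 : 0 < ε) {t : ℝ} (h0 : 0 ≤ t) (h1 : t ≤ ε) :
    gFun ε σ 1 γ t = σ t := by
  simp only [gFun, mul_one, one_mul]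
  rw [if_pos (by linarith : t ≤ 2*ε), abs_of_nonpos (by linarith : t - ε ≤ 0),
    show ε - -(t - ε) = t by ring]
  exact stickExt_eq h0 h1

lemma gFun_caseB (hε0 : 0 < ε) {t : ℝ} (h1 : ε ≤ t) (h2 : t ≤ 2*ε) :
    gFun ε σ 1 γ t = σ (2*ε - t) := by
  simp only [gFun, mul_one, one_mul]
  rw [if_pos h2, abs_of_nonneg (by linarith : (0:ℝ) ≤ t - ε), show ε - (t - ε) = 2*ε - t by ring]
  exact stickExt_eq (by linarith) (by linarith)

lemma gFun_caseC (hε0 : 0 < ε) (hε : ε < 1/6) (hγ0 : γ 0 = x₀) (hσ0 : σ 0 = x₀)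
    {t : ℝ} (h1 : 2*ε ≤ t) (h2 : t ≤ 1 - 2*ε) :
    gFun ε σ 1 γ t = γ (projIcc 0 1 zero_le_one ((t - 2*ε)/(1 - 4*ε))) := by
  simp only [gFun, mul_one, one_mul]
  by_cases h : t ≤ 2*ε
  · have ht : t = 2*ε := le_antisymm h h1
    subst ht
    rw [if_pos h, show (2*ε - ε) = ε by ring, abs_of_nonneg hε0.le, sub_self,
      stickExt_eq le_rfl hε0.le, hσ0, sub_self, zero_div, projIcc_left]
    exact hγ0.symm
  · rw [if_neg h, if_pos h2]

lemma gFun_caseD (hε0 : 0 < ε) (hε : ε < 1/6) (hγ1 : γ 1 = x₀) (hσ0 : σ 0 = x₀)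
    {t : ℝ} (h1 : 1 - 2*ε ≤ t) (h2 : t ≤ 1 - ε) :
    gFun ε σ 1 γ t = σ (t - 1 + 2*ε) := by
  have hne : (1:ℝ) - 4*ε ≠ 0 := ne_of_gt (by linarith)
  simp only [gFun, mul_one, one_mul]
  rw [if_neg (not_le.2 (by linarith : 2*ε < t))]
  by_cases h : t ≤ 1 - 2*ε
  · have ht : t = 1 - 2*ε := le_antisymm h h1
    subst ht
    rw [if_pos h, show ((1 - 2*ε) - 2*ε)/(1 - 4*ε) = 1 by rw [div_eq_one_iff_eq hne]; ring,
      projIcc_right]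
    show γ 1 = σ (1 - 2*ε - 1 + 2*ε)
    rw [hγ1, show (1:ℝ) - 2*ε - 1 + 2*ε = 0 by ring, hσ0]
  · rw [if_neg h, abs_of_nonneg (by linarith : (0:ℝ) ≤ 1 - t - ε),
      show ε - (1 - t - ε) = t - 1 + 2*ε by ring]
    exact stickExt_eq (by linarith [not_le.1 h]) (by linarith)

lemma gFun_caseE (hε0 : 0 < ε) (hε : ε < 1/6) {t : ℝ} (h1 : 1 - ε ≤ t) (h2 : t ≤ 1) :
    gFun ε σ 1 γ t = σ (1 - t) := by
  simp only [gFun, mul_one, one_mul]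
  rw [if_neg (not_le.2 (by linarith : 2*ε < t)), if_neg (not_le.2 (by linarith : 1 - 2*ε < t)),
    abs_of_nonpos (by linarith : 1 - t - ε ≤ 0), show ε - -(1 - t - ε) = 1 - t by ring]
  exact stickExt_eq (by linarith) (by linarith)

/-- The piecewise-linear reparametrization of `[0,1]`. -/
noncomputable def rFun (ε t : ℝ) : ℝ :=
  if t ≤ ε then t else if t ≤ 2*ε then 2*ε - t
  else if t ≤ 1 - 2*ε then (t - 2*ε)/(1 - 4*ε)
  else if t ≤ 1 - ε then 2 - 2*ε - t else t

omit [TopologicalSpace M] in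
lemma rFun_cont (hε0 : 0 < ε) (hε : ε < 1/6) : Continuous (rFun ε) := by
  have hne : (1:ℝ) - 4*ε ≠ 0 := ne_of_gt (by linarith)
  unfold rFun
  refine Continuous.if_le continuous_id ?_ continuous_id continuous_const ?_
  · refine Continuous.if_le (by fun_prop) ?_ continuous_id continuous_const ?_
    · refine Continuous.if_le (by fun_prop) ?_ continuous_id continuous_const ?_
      · refine Continuous.if_le (by fun_prop) continuous_id continuous_id continuous_const ?_
        intro t ht; rw [ht]; ring
      · intro t ht
        rw [ht, if_pos (by linarith : (1:ℝ) - 2*ε ≤ 1 - ε), div_eq_iff hne]; ring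
    · intro t ht
      rw [ht, if_pos (by linarith : 2*ε ≤ 1 - 2*ε), sub_self, zero_div]
  · intro t ht
    rw [ht, if_pos (by linarith : ε ≤ 2*ε)]; ring

omit [TopologicalSpace M] in
lemma rFun_small {t : ℝ} (h : t ≤ ε) : rFun ε t = t := if_pos h

omit [TopologicalSpace M] in
lemma rFun_large (hε0 : 0 < ε) (hε : ε < 1/6) {t : ℝ} (h : 1 - ε ≤ t) : rFun ε t = t := by
  unfold rFun
  split_ifs with ha hb hc hd
  · rfl
  · linarith
  · linarith
  · linarith
  · rfl

omit [TopologicalSpace M] in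
lemma rFun_midL (hε0 : 0 < ε) (hε : ε < 1/6) {t : ℝ} (h1 : 2*ε ≤ t) (h2 : t ≤ 1 - 2*ε) :
    rFun ε t = (t - 2*ε)/(1 - 4*ε) := by
  unfold rFun
  split_ifs with ha hb hc hd
  · linarith
  · have ht : t = 2*ε := le_antisymm hb h1
    rw [ht, sub_self, zero_div]
  all_goals linarith

omit [TopologicalSpace M] in
lemma rFun_midR (hε0 : 0 < ε) (hε : ε < 1/6) {t : ℝ} (h1 : 1 - 2*ε ≤ t) (h2 : t ≤ 1 - ε) :
    rFun ε t = 2 - 2*ε - t := by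
  have hne : (1:ℝ) - 4*ε ≠ 0 := ne_of_gt (by linarith)
  unfold rFun
  split_ifs with ha hb hc hd
  · linarith
  · linarith
  · have ht : t = 1 - 2*ε := le_antisymm hc h1
    rw [ht, div_eq_iff hne]; ring
  all_goals linarith

lemma gFun_eq_reparam (hε0 : 0 < ε) (hε : ε < 1/6) (hσ0 : σ 0 = x₀)
    (hγ0 : γ 0 = x₀) (hγ1 : γ 1 = x₀)
    (hst : ∀ u : unitInterval, ((u:ℝ) ≤ ε → γ u = σ u) ∧ (1 - ε ≤ (u:ℝ) → γ u = σ (1 - (u:ℝ))))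
    (t : unitInterval) :
    γ (projIcc 0 1 zero_le_one (rFun ε (t:ℝ))) = gFun ε σ 1 γ (t:ℝ) := by
  have h0 := t.2.1; have h1 := t.2.2
  rcases le_or_gt (t:ℝ) ε with hA | hA
  · rw [rFun_small hA, projIcc_unit, gFun_caseA hε0 h0 hA]
    exact (hst t).1 hA
  rcases le_or_gt (t:ℝ) (2*ε) with hB | hB
  · have hr : rFun ε (t:ℝ) = 2*ε - t := by unfold rFun; rw [if_neg (not_le.2 hA), if_pos hB]
    have hmem : 2*ε - (t:ℝ) ∈ Icc (0:ℝ) 1 := ⟨by linarith, by linarith⟩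
    rw [hr, projIcc_of_mem zero_le_one hmem, gFun_caseB hε0 hA.le hB]
    exact (hst ⟨2*ε - (t:ℝ), hmem⟩).1 (by show 2*ε - (t:ℝ) ≤ ε; linarith)
  rcases le_or_gt (t:ℝ) (1 - 2*ε) with hC | hC
  · rw [rFun_midL hε0 hε hB.le hC, gFun_caseC hε0 hε hγ0 hσ0 hB.le hC]
  rcases le_or_gt (t:ℝ) (1 - ε) with hD | hD
  · have hmem : 2 - 2*ε - (t:ℝ) ∈ Icc (0:ℝ) 1 := ⟨by linarith, by linarith⟩
    rw [rFun_midR hε0 hε hC.le hD, projIcc_of_mem zero_le_one hmem,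
      gFun_caseD hε0 hε hγ1 hσ0 hC.le hD,
      (hst ⟨2 - 2*ε - (t:ℝ), hmem⟩).2 (by show 1 - ε ≤ 2 - 2*ε - (t:ℝ); linarith)]
    congr 1
    show 1 - (2 - 2*ε - (t:ℝ)) = (t:ℝ) - 1 + 2*ε
    ring
  · rw [rFun_large hε0 hε hD.le, projIcc_unit, gFun_caseE hε0 hε hD.le h1]
    exact (hst t).2 hD.le

end Aux

section Main
variable {M : Type*} [TopologicalSpace M] {x₀ : M} {ε : ℝ} {σ : ℝ → M}

/-- The retraction `π_σ : Ω M → Ω^σ M` as a continuous map. -/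
noncomputable def piMap (x₀ : M) (hε0 : 0 < ε) (hε : ε < 1/6)
    (hσ : ContinuousOn σ (Icc 0 ε)) (hσ0 : σ 0 = x₀) :
    C(OmegaLoop M x₀, StickOmegaLoop M x₀ ε σ) where
  toFun γ :=
    ⟨⟨⟨fun t => gFun ε σ 1 γ.1 (t : ℝ),
        gFun_cont hε0 hε hσ hσ0 (continuous_const : Continuous fun _ : unitInterval => (1:ℝ))
          (continuous_const : Continuous fun _ : unitInterval => γ.1) continuous_subtype_val
          (fun _ => zero_le_one) (fun _ => le_rfl) (fun _ => γ.2.1) (fun _ => γ.2.2)⟩,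
      gFun_at_zero hε0 zero_le_one hσ0,
      gFun_at_one hε0 hε zero_le_one le_rfl γ.2.2 hσ0⟩,
    fun t => ⟨fun h => gFun_caseA hε0 t.2.1 h, fun h => gFun_caseE hε0 hε h t.2.2⟩⟩
  continuous_toFun := by
    apply Continuous.subtype_mk
    apply Continuous.subtype_mk
    apply ContinuousMap.continuous_of_continuous_uncurry
    exact gFun_cont (x₀ := x₀) hε0 hε hσ hσ0
      (continuous_const : Continuous fun _ : OmegaLoop M x₀ × unitInterval => (1:ℝ))
      (continuous_subtype_val.comp continuous_fst)
      (continuous_subtype_val.comp continuous_snd)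
      (fun _ => zero_le_one) (fun _ => le_rfl) (fun p => p.1.2.1) (fun p => p.1.2.2)

/-- The homotopy from `ι ∘ π_σ` to the identity of `Ω M`. -/
noncomputable def bigHomotopy (x₀ : M) (hε0 : 0 < ε) (hε : ε < 1/6)
    (hσ : ContinuousOn σ (Icc 0 ε)) (hσ0 : σ 0 = x₀) :
    ((stickInclusion M x₀ ε σ).comp (piMap x₀ hε0 hε hσ hσ0)).Homotopy
      (ContinuousMap.id (OmegaLoop M x₀)) where
  toFun p :=
    ⟨⟨fun t => gFun ε σ (1 - (p.1 : ℝ)) p.2.1 (t : ℝ),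
        gFun_cont hε0 hε hσ hσ0 continuous_const continuous_const continuous_subtype_val
          (fun _ => by linarith [p.1.2.2]) (fun _ => by linarith [p.1.2.1])
          (fun _ => p.2.2.1) (fun _ => p.2.2.2)⟩,
      gFun_at_zero hε0 (by linarith [p.1.2.2]) hσ0,
      gFun_at_one hε0 hε (by linarith [p.1.2.2]) (by linarith [p.1.2.1]) p.2.2.2 hσ0⟩
  continuous_toFun := by
    apply Continuous.subtype_mk
    apply ContinuousMap.continuous_of_continuous_uncurry
    exact gFun_cont (x₀ := x₀) hε0 hε hσ hσ0
      (continuous_const.sub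
        (continuous_subtype_val.comp (continuous_fst.comp continuous_fst)))
      (continuous_subtype_val.comp (continuous_snd.comp continuous_fst))
      (continuous_subtype_val.comp continuous_snd)
      (fun p => by linarith [p.1.1.2.2]) (fun p => by linarith [p.1.1.2.1])
      (fun p => p.1.2.2.1) (fun p => p.1.2.2.2)
  map_zero_left γ := by
    apply Subtype.ext
    apply ContinuousMap.ext
    intro t
    show gFun ε σ (1 - ((0 : unitInterval) : ℝ)) γ.1 (t : ℝ) = gFun ε σ 1 γ.1 (t : ℝ)
    norm_num
  map_one_left γ := by
    apply Subtype.ext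
    apply ContinuousMap.ext
    intro t
    show gFun ε σ (1 - ((1 : unitInterval) : ℝ)) γ.1 (t : ℝ) = γ.1 t
    rw [show (1 : ℝ) - ((1 : unitInterval) : ℝ) = 0 by norm_num]
    exact gFun_s_zero hε0 hσ0 γ.2.1 t

/-- The homotopy from `π_σ ∘ ι` to the identity of `Ω^σ M`. -/
noncomputable def smallHomotopy (x₀ : M) (hε0 : 0 < ε) (hε : ε < 1/6)
    (hσ : ContinuousOn σ (Icc 0 ε)) (hσ0 : σ 0 = x₀) :
    ((piMap x₀ hε0 hε hσ hσ0).comp (stickInclusion M x₀ ε σ)).Homotopy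
      (ContinuousMap.id (StickOmegaLoop M x₀ ε σ)) where
  toFun p :=
    ⟨⟨⟨fun t => p.2.1.1
          (projIcc 0 1 zero_le_one
            ((1 - (p.1 : ℝ)) * rFun ε (t : ℝ) + (p.1 : ℝ) * (t : ℝ))), by
        apply Continuous.eval continuous_const
        exact continuous_projIcc.comp
          ((continuous_const.mul ((rFun_cont hε0 hε).comp continuous_subtype_val)).add
            (continuous_const.mul continuous_subtype_val))⟩, by
      show p.2.1.1 (projIcc 0 1 zero_le_one
        ((1 - (p.1 : ℝ)) * rFun ε ((0 : unitInterval) : ℝ)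
          + (p.1 : ℝ) * ((0 : unitInterval) : ℝ))) = x₀
      rw [show ((0 : unitInterval) : ℝ) = 0 from rfl, rFun_small hε0.le,
        show (1 - (p.1 : ℝ)) * 0 + (p.1 : ℝ) * 0 = 0 by ring, projIcc_left]
      exact p.2.1.2.1, by
      show p.2.1.1 (projIcc 0 1 zero_le_one
        ((1 - (p.1 : ℝ)) * rFun ε ((1 : unitInterval) : ℝ)
          + (p.1 : ℝ) * ((1 : unitInterval) : ℝ))) = x₀
      rw [show ((1 : unitInterval) : ℝ) = 1 from rfl, rFun_large hε0 hε (by linarith),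
        show (1 - (p.1 : ℝ)) * 1 + (p.1 : ℝ) * 1 = 1 by ring, projIcc_right]
      exact p.2.1.2.2⟩, by
      intro u
      constructor
      · intro hu
        show p.2.1.1 (projIcc 0 1 zero_le_one
          ((1 - (p.1 : ℝ)) * rFun ε (u : ℝ) + (p.1 : ℝ) * (u : ℝ))) = σ (u : ℝ)
        rw [rFun_small hu,
          show (1 - (p.1 : ℝ)) * (u : ℝ) + (p.1 : ℝ) * (u : ℝ) = (u : ℝ) by ring,
          projIcc_unit]
        exact (p.2.2 u).1 hu
      · intro hu
        show p.2.1.1 (projIcc 0 1 zero_le_one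
          ((1 - (p.1 : ℝ)) * rFun ε (u : ℝ) + (p.1 : ℝ) * (u : ℝ))) = σ (1 - (u : ℝ))
        rw [rFun_large hε0 hε hu,
          show (1 - (p.1 : ℝ)) * (u : ℝ) + (p.1 : ℝ) * (u : ℝ) = (u : ℝ) by ring,
          projIcc_unit]
        exact (p.2.2 u).2 hu⟩
  continuous_toFun := by
    apply Continuous.subtype_mk
    apply Continuous.subtype_mk
    apply ContinuousMap.continuous_of_continuous_uncurry
    have hs : Continuous fun p : (unitInterval × StickOmegaLoop M x₀ ε σ) × unitInterval =>
        ((p.1.1 : unitInterval) : ℝ) :=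
      continuous_subtype_val.comp (continuous_fst.comp continuous_fst)
    have ht : Continuous fun p : (unitInterval × StickOmegaLoop M x₀ ε σ) × unitInterval =>
        ((p.2 : unitInterval) : ℝ) := continuous_subtype_val.comp continuous_snd
    have hr : Continuous fun p : (unitInterval × StickOmegaLoop M x₀ ε σ) × unitInterval =>
        rFun ε ((p.2 : unitInterval) : ℝ) := (rFun_cont hε0 hε).comp ht
    show Continuous fun p : (unitInterval × StickOmegaLoop M x₀ ε σ) × unitInterval =>
      p.1.2.1.1 (projIcc 0 1 zero_le_one
        ((1 - ((p.1.1 : unitInterval) : ℝ)) * rFun ε ((p.2 : unitInterval) : ℝ)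
          + ((p.1.1 : unitInterval) : ℝ) * ((p.2 : unitInterval) : ℝ)))
    exact Continuous.eval
      (continuous_subtype_val.comp
        (continuous_subtype_val.comp (continuous_snd.comp continuous_fst)))
      (continuous_projIcc.comp
        (((continuous_const.sub hs).mul hr).add (hs.mul ht)))
  map_zero_left γ := by
    apply Subtype.ext
    apply Subtype.ext
    apply ContinuousMap.ext
    intro t
    show γ.1.1 (projIcc 0 1 zero_le_one
        ((1 - ((0 : unitInterval) : ℝ)) * rFun ε (t : ℝ)
          + ((0 : unitInterval) : ℝ) * (t : ℝ)))
      = gFun ε σ 1 γ.1.1 (t : ℝ)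
    rw [show (1 - ((0 : unitInterval) : ℝ)) * rFun ε (t : ℝ)
        + ((0 : unitInterval) : ℝ) * (t : ℝ) = rFun ε (t : ℝ) by
      rw [show ((0 : unitInterval) : ℝ) = 0 from rfl]; ring]
    exact gFun_eq_reparam hε0 hε hσ0 γ.1.2.1 γ.1.2.2 γ.2 t
  map_one_left γ := by
    apply Subtype.ext
    apply Subtype.ext
    apply ContinuousMap.ext
    intro t
    show γ.1.1 (projIcc 0 1 zero_le_one
        ((1 - ((1 : unitInterval) : ℝ)) * rFun ε (t : ℝ)
          + ((1 : unitInterval) : ℝ) * (t : ℝ))) = γ.1.1 t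
    rw [show (1 - ((1 : unitInterval) : ℝ)) * rFun ε (t : ℝ)
        + ((1 : unitInterval) : ℝ) * (t : ℝ) = (t : ℝ) by
      rw [show ((1 : unitInterval) : ℝ) = 1 from rfl]; ring]
    rw [projIcc_unit]

end Main

/-- For a stick `σ` (an injective continuous map `[0,ε] → M` with
`σ 0 = x₀`, where `0 < ε < 1/6`), the map `π_σ : Ω M → Ω^σ M` described by the explicit
piecewise formulas is continuous, `π_σ ∘ ι` is homotopic to the identity of `Ω^σ M`, and
`ι ∘ π_σ` is homotopic to the identity of `Ω M`; in particular the inclusion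
`ι : Ω^σ M ↪ Ω M` is a homotopy equivalence. -/
theorem stick_inclusion_homotopy_equiv
    {M : Type*} [TopologicalSpace M] (x₀ : M) (ε : ℝ) (hε0 : 0 < ε) (hε : ε < 1/6)
    (σ : ℝ → M) (hσcont : ContinuousOn σ (Icc 0 ε)) (hσinj : InjOn σ (Icc 0 ε))
    (hσ0 : σ 0 = x₀) :
    ∃ πσ : C(OmegaLoop M x₀, StickOmegaLoop M x₀ ε σ),
      (∀ (γ : OmegaLoop M x₀) (t : unitInterval),
        ((t : ℝ) ≤ ε → (πσ γ).1.1 t = σ t) ∧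
        (ε ≤ (t : ℝ) → (t : ℝ) ≤ 2 * ε → (πσ γ).1.1 t = σ (2 * ε - (t : ℝ))) ∧
        (2 * ε ≤ (t : ℝ) → (t : ℝ) ≤ 1 - 2 * ε →
          (πσ γ).1.1 t = γ.1 (projIcc 0 1 zero_le_one (((t : ℝ) - 2 * ε) / (1 - 4 * ε)))) ∧
        (1 - 2 * ε ≤ (t : ℝ) → (t : ℝ) ≤ 1 - ε →
          (πσ γ).1.1 t = σ ((t : ℝ) - 1 + 2 * ε)) ∧
        (1 - ε ≤ (t : ℝ) → (πσ γ).1.1 t = σ (1 - (t : ℝ)))) ∧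
      (πσ.comp (stickInclusion M x₀ ε σ)).Homotopic (ContinuousMap.id _) ∧
      ((stickInclusion M x₀ ε σ).comp πσ).Homotopic (ContinuousMap.id _) := by
  refine ⟨piMap x₀ hε0 hε hσcont hσ0, ?_, ⟨smallHomotopy x₀ hε0 hε hσcont hσ0⟩,
    ⟨bigHomotopy x₀ hε0 hε hσcont hσ0⟩⟩
  intro γ t
  exact ⟨fun h => gFun_caseA hε0 t.2.1 h,
    fun h1 h2 => gFun_caseB hε0 h1 h2,
    fun h1 h2 => gFun_caseC hε0 hε γ.2.1 hσ0 h1 h2,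
    fun h1 h2 => gFun_caseD hε0 hε γ.2.2 hσ0 h1 h2,
    fun h => gFun_caseE hε0 hε h t.2.2⟩
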